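/- arXiv:1609.04737 — 4 statements merged into one kernel-verified Lean document; each statement's English description precedes it below -/
import Mathlib

section
/- Let G be a group and H a normal subgroup that has the infinite conjugacy class (icc) property (every H-conjugacy class {xhx^{-1} : x∈H} of a nontrivial h∈H is infinite). If g ∈ G is such that the H-conjugacy class C_H(g) = {xgx^{-1} : x ∈ H} is finite, then C_H(g) = {g}, i.e., g commutes with every element of H. -/
/-- If `H` is a normal subgroup of `G` which is icc (every nontrivial `H`-conjugacy class
of a nontrivial element of `H` is infinite), and the `H`-conjugacy class of `g ∈ G` is
finite, then it equals `{g}`, i.e. `g` commutes with every element of `H`. -/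
theorem finite_subgroup_conjugacy_class_of_icc {G : Type*} [Group G]
    (H : Subgroup G) (hN : H.Normal)
    (hicc : ∀ h ∈ H, h ≠ 1 → {g : G | ∃ x ∈ H, x * h * x⁻¹ = g}.Infinite)
    (g : G) (hfin : {g' : G | ∃ x ∈ H, x * g * x⁻¹ = g'}.Finite) :
    ({g' : G | ∃ x ∈ H, x * g * x⁻¹ = g'} = {g}) ∧ ∀ x ∈ H, x * g = g * x := by
  set S := {g' : G | ∃ x ∈ H, x * g * x⁻¹ = g'} with hS
  have key : ∀ x ∈ H, x * g = g * x := by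
    intro x hx
    by_contra hne
    have hh : g⁻¹ * (x * g * x⁻¹) ∈ H := by
      have h1 : g⁻¹ * x * g ∈ H := hN.conj_mem' x hx g
      have h2 := H.mul_mem h1 (H.inv_mem hx)
      convert h2 using 1
      group
    have hne1 : g⁻¹ * (x * g * x⁻¹) ≠ 1 := by
      intro h
      apply hne
      have hg : x * g * x⁻¹ = g := by
        have := congrArg (fun z => g * z) h
        simpa [mul_assoc] using this
      calc x * g = (x * g * x⁻¹) * x := by group
        _ = g * x := by rw [hg]
    have hinf := hicc _ hh hne1
    apply hinf
    have hsub : {g' : G | ∃ y ∈ H, y * (g⁻¹ * (x * g * x⁻¹)) * y⁻¹ = g'} ⊆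
        (fun p : G × G => p.1⁻¹ * p.2) '' (S ×ˢ S) := by
      rintro z ⟨y, hy, rfl⟩
      refine ⟨(y * g * y⁻¹, (y * x) * g * (y * x)⁻¹),
        ⟨⟨y, hy, rfl⟩, ⟨y * x, H.mul_mem hy hx, rfl⟩⟩, ?_⟩
      simp only
      group
    exact (((hfin.prod hfin).image _).subset hsub)
  refine ⟨?_, key⟩
  ext g'
  simp only [hS, Set.mem_setOf_eq, Set.mem_singleton_iff]
  constructor
  · rintro ⟨x, hx, rfl⟩
    rw [key x hx]
    group
  · rintro rfl
    exact ⟨1, H.one_mem, by group⟩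
end

section
/- Let G = F_n ⋊_α B_n be the semidirect product of the free group F_n by the braid group B_n via Artin's representation α (assume n ≥ 3 and that α is injective). For g ∈ G, the set C_{F_n}(g) = {xgx^{-1} : x ∈ F_n} is finite if and only if g lies in the center of G, which is the infinite cyclic group generated by (x_1⋯x_n)·z, where z = (s_1⋯s_{n−1})^n generates Z(B_n). -/
/-- The braid relations on `m` generators `s_0, …, s_{m-1}`. -/
def braidRels (m : ℕ) : Set (FreeGroup (Fin m)) :=
  { r | (∃ i j : Fin m, (i : ℕ) + 1 = (j : ℕ) ∧
          r = FreeGroup.of i * FreeGroup.of j * FreeGroup.of i *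
              (FreeGroup.of j * FreeGroup.of i * FreeGroup.of j)⁻¹) ∨
        (∃ i j : Fin m, (i : ℕ) + 2 ≤ (j : ℕ) ∧
          r = FreeGroup.of i * FreeGroup.of j * (FreeGroup.of j * FreeGroup.of i)⁻¹) }

/-- The braid group `B_n` on `n` strands, with `n - 1` generators. -/
abbrev BraidGroup (n : ℕ) := PresentedGroup (braidRels (n - 1))

/-- The standard generators of the braid group. -/
def braidGen {n : ℕ} (i : Fin (n - 1)) : BraidGroup n := PresentedGroup.of i

def finInc {n : ℕ} (i : Fin (n - 1)) : Fin n := ⟨(i : ℕ), by omega⟩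

def finSucc' {n : ℕ} (i : Fin (n - 1)) : Fin n := ⟨(i : ℕ) + 1, by omega⟩

/-- `α : B_n → Aut(F_n)` is Artin's representation if it acts on the generators in
the prescribed way: `α(s_i)(x_i) = x_{i+1}`, `α(s_i)(x_{i+1}) = x_{i+1}⁻¹ x_i x_{i+1}`,
and `α(s_i)(x_j) = x_j` otherwise. -/
def IsArtinRep {n : ℕ} (α : BraidGroup n →* MulAut (FreeGroup (Fin n))) : Prop :=
  ∀ (i : Fin (n - 1)) (j : Fin n),
    α (braidGen i) (FreeGroup.of j) =
      if (j : ℕ) = (i : ℕ) then FreeGroup.of (finSucc' i)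
      else if (j : ℕ) = (i : ℕ) + 1 then
        (FreeGroup.of (finSucc' i))⁻¹ * FreeGroup.of (finInc i) * FreeGroup.of (finSucc' i)
      else FreeGroup.of j

/-- The element `x_1 x_2 ⋯ x_n` of the free group `F_n`. -/
def fullWord (n : ℕ) : FreeGroup (Fin n) :=
  (List.ofFn (fun j : Fin n => FreeGroup.of j)).prod

/-- The central element `z = (s_1 ⋯ s_{n-1})^n` of the braid group `B_n`. -/
def braidZ (n : ℕ) : BraidGroup n :=
  ((List.ofFn (fun i : Fin (n - 1) => braidGen i)).prod) ^ n

/-!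
Write `g = (u, b)` and `W = x_1 ⋯ x_n`. Every `α c` fixes `W` and `α z` is conjugation by
`W⁻¹`, so `(W, z)` is central. Conversely, if `g` has finitely many `F_n`-conjugates, the
`x ∈ F_n` commuting with `g` form a subgroup of finite index, on which the endomorphism
`x ↦ u · α b (x) · u⁻¹` is the identity. In a free group of rank at least two a finite-index
subgroup has trivial centralizer, which forces this endomorphism to be the identity everywhere,
i.e. `α b` is conjugation by `u⁻¹`. Then `u` commutes with `W`; since `W` is primitive and
centralizers of generators are cyclic, `u = W ^ k`, so `α b = α (z ^ k)` and `b = z ^ k` by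
injectivity of `α`.
-/

namespace FreeGroup

variable {ι : Type*}

open Subgroup

theorem mk_singleton_mem_zpowers (a : ι) (b : Bool) : mk [(a, b)] ∈ zpowers (of a) := by
  cases b
  · rw [show mk [(a, false)] = (of a)⁻¹ from rfl]
    exact inv_mem (mem_zpowers _)
  · exact mem_zpowers _

theorem toWord_mk_of_toWord_eq_cons [DecidableEq ι] {u : FreeGroup ι} {x : ι × Bool}
    {t : List (ι × Bool)} (hu : u.toWord = x :: t) : (mk t).toWord = t ∧ u = mk [x] * mk t := by
  refine ⟨?_, by rw [mul_mk, List.singleton_append, ← hu, mk_toWord]⟩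
  rw [toWord_mk, IsReduced.reduce_eq]
  exact isReduced_toWord.infix (hu ▸ (List.suffix_cons x t).isInfix)

theorem mem_zpowers_of_toWord_eq_cons [DecidableEq ι] {a : ι} {b : Bool} {M : ℕ}
    {u : FreeGroup ι} {t : List (ι × Bool)} (hu : u.toWord = (a, b) :: t)
    (h : Commute u (of a ^ M))
    (ih : ∀ v : FreeGroup ι, v.toWord.length < u.toWord.length → Commute v (of a ^ M) →
      v ∈ zpowers (of a)) :
    u ∈ zpowers (of a) := by
  obtain ⟨ht, rfl⟩ := toWord_mk_of_toWord_eq_cons hu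
  have hletter := mk_singleton_mem_zpowers a b
  have hcomm : Commute (mk [(a, b)]) (of a ^ M) := by
    obtain ⟨k, hk⟩ := mem_zpowers_iff.mp hletter
    exact hk ▸ ((Commute.refl (of a)).zpow_left k).pow_right M
  refine mul_mem hletter (ih _ (by rw [ht, hu]; simp) ?_)
  simpa only [inv_mul_cancel_left] using hcomm.inv_left.mul_left h

theorem IsReduced.append_replicate {L : List (ι × Bool)} (hL : IsReduced L) {a : ι} {M : ℕ}
    (hlast : ∀ p ∈ L.getLast?, p.1 ≠ a) : IsReduced (L ++ List.replicate M (a, true)) := by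
  refine List.isChain_append.mpr ⟨hL, List.isChain_replicate_of_rel M fun _ => rfl, ?_⟩
  intro p hp q hq hpq
  rw [List.eq_of_mem_replicate (List.mem_of_mem_head? hq)] at hpq
  exact absurd hpq (hlast p hp)

theorem IsReduced.replicate_append {L : List (ι × Bool)} (hL : IsReduced L) {a : ι} {M : ℕ}
    (hhead : ∀ p ∈ L.head?, p.1 ≠ a) : IsReduced (List.replicate M (a, true) ++ L) := by
  refine List.isChain_append.mpr ⟨List.isChain_replicate_of_rel M fun _ => rfl, hL, ?_⟩
  intro p hp q hq hpq
  rw [List.eq_of_mem_replicate (List.mem_of_mem_getLast? hp)] at hpq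
  exact absurd hpq.symm (hhead q hq)

/-- If neither end of `u` is a letter `a^{±1}`, then `u * a ^ M` and `a ^ M * u` are reduced as
written, and their first letters differ unless `u = 1`. -/
theorem eq_one_of_commute_pow [DecidableEq ι] {a : ι} {M : ℕ} (hM : M ≠ 0)
    {u : FreeGroup ι} (h : Commute u (of a ^ M)) (hhead : ∀ p ∈ u.toWord.head?, p.1 ≠ a)
    (hhead_inv : ∀ p ∈ u⁻¹.toWord.head?, p.1 ≠ a) : u = 1 := by
  have hlast : ∀ p ∈ u.toWord.getLast?, p.1 ≠ a := fun p hp =>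
    hhead_inv (p.1, !p.2) (by
      rw [toWord_inv, invRev, List.head?_reverse, List.getLast?_map]
      exact Option.mem_map_of_mem _ hp)
  have hright : (u * of a ^ M).toWord = u.toWord ++ List.replicate M (a, true) := by
    rw [toWord_mul, toWord_of_pow, (isReduced_toWord.append_replicate hlast).reduce_eq]
  have hleft : (of a ^ M * u).toWord = List.replicate M (a, true) ++ u.toWord := by
    rw [toWord_mul, toWord_of_pow, (isReduced_toWord.replicate_append hhead).reduce_eq]
  by_contra hne
  obtain ⟨q, t, hq⟩ := List.exists_cons_of_ne_nil (toWord_eq_nil_iff.not.mpr hne)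
  obtain ⟨m, rfl⟩ := Nat.exists_eq_succ_of_ne_zero hM
  have hwords := congrArg toWord h.eq
  rw [hright, hleft, hq, List.replicate_succ, List.cons_append, List.cons_append,
    List.cons.injEq] at hwords
  exact hhead q (by simp [hq]) (congrArg Prod.fst hwords.1)

theorem mem_zpowers_of_commute_of_pow {a : ι} {M : ℕ} (hM : M ≠ 0) {u : FreeGroup ι}
    (h : Commute u (of a ^ M)) : u ∈ zpowers (of a) := by
  classical
  induction hN : u.toWord.length using Nat.strong_induction_on generalizing u with
  | _ N ih =>
  subst hN
  by_cases hhead : ∃ p ∈ u.toWord.head?, p.1 = a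
  · obtain ⟨⟨c, b⟩, hp, rfl⟩ := hhead
    exact mem_zpowers_of_toWord_eq_cons (List.eq_cons_of_mem_head? hp) h
      (fun v hv hc => ih _ hv hc rfl)
  by_cases hhead_inv : ∃ p ∈ u⁻¹.toWord.head?, p.1 = a
  · obtain ⟨⟨c, b⟩, hp, rfl⟩ := hhead_inv
    refine inv_mem_iff.mp (mem_zpowers_of_toWord_eq_cons (List.eq_cons_of_mem_head? hp)
      h.inv_left (fun v hv hc => ih _ ?_ hc rfl))
    rwa [toWord_inv, invRev_length] at hv
  push Not at hhead hhead_inv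
  exact eq_one_of_commute_pow hM h hhead hhead_inv ▸ one_mem _

theorem mem_zpowers_of_commute_of_leftInverse {ψ χ : FreeGroup ι →* FreeGroup ι}
    (hχψ : Function.LeftInverse χ ψ) {w : FreeGroup ι} {a : ι} (hw : ψ w = of a)
    {u : FreeGroup ι} (h : Commute u w) : u ∈ zpowers w := by
  have hψu : ψ u ∈ zpowers (of a) :=
    mem_zpowers_of_commute_of_pow one_ne_zero (by simpa [hw] using h.map ψ)
  simpa [MonoidHom.map_zpowers, ← hw, hχψ _] using mem_map_of_mem χ hψu

theorem eq_one_of_commute_pow_of_commute_pow {a b : ι} (hab : a ≠ b) {M N : ℕ} (hM : M ≠ 0)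
    (hN : N ≠ 0) {c : FreeGroup ι} (ha : Commute c (of a ^ M)) (hb : Commute c (of b ^ N)) :
    c = 1 := by
  classical
  obtain ⟨k, rfl⟩ := mem_zpowers_iff.mp (mem_zpowers_of_commute_of_pow hM ha)
  obtain ⟨l, hl⟩ := mem_zpowers_iff.mp (mem_zpowers_of_commute_of_pow hN hb)
  let exponentSum : FreeGroup ι →* Multiplicative ℤ := lift (Pi.mulSingle a (.ofAdd 1))
  have hk := congrArg exponentSum hl
  simp only [exponentSum, map_zpow, lift_apply_of, Pi.mulSingle_eq_of_ne hab.symm,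
    Pi.mulSingle_eq_same, one_zpow] at hk
  simpa using (congrArg Multiplicative.toAdd hk).symm

theorem eq_one_of_forall_commute_of_finiteIndex {a b : ι} (hab : a ≠ b)
    (K : Subgroup (FreeGroup ι)) [K.FiniteIndex] {c : FreeGroup ι}
    (hc : ∀ h ∈ K, Commute c h) : c = 1 := by
  obtain ⟨M, hM, -, haM⟩ := K.exists_pow_mem_of_index_ne_zero FiniteIndex.index_ne_zero (of a)
  obtain ⟨N, hN, -, hbN⟩ := K.exists_pow_mem_of_index_ne_zero FiniteIndex.index_ne_zero (of b)
  exact eq_one_of_commute_pow_of_commute_pow hab hM.ne' hN.ne' (hc _ haM) (hc _ hbN)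

/-- `x⁻¹ * φ x` centralizes the normal core of `K`. -/
theorem eq_id_of_eqOn_finiteIndex {a b : ι} (hab : a ≠ b) (K : Subgroup (FreeGroup ι))
    [K.FiniteIndex] (φ : FreeGroup ι →* FreeGroup ι) (hφ : Set.EqOn φ id K) :
    φ = MonoidHom.id _ := by
  refine MonoidHom.ext fun x => ?_
  suffices x⁻¹ * φ x = 1 from (inv_mul_eq_one.mp this).symm
  refine eq_one_of_forall_commute_of_finiteIndex hab K.normalCore fun h hh => ?_
  have hconj : φ x * h * (φ x)⁻¹ = x * h * x⁻¹ := by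
    have hfix : φ h = h := hφ (K.normalCore_le hh)
    have hfix_conj : φ (x * h * x⁻¹) = x * h * x⁻¹ :=
      hφ (K.normalCore_le (K.normalCore_normal.conj_mem h hh x))
    rw [← hfix_conj, _root_.map_mul, _root_.map_mul, _root_.map_inv, hfix]
  calc x⁻¹ * φ x * h = x⁻¹ * (φ x * h * (φ x)⁻¹) * φ x := by group
    _ = h * (x⁻¹ * φ x) := by rw [hconj]; group

end FreeGroup

theorem Subgroup.finiteIndex_comap_centralizer_of_finite {F G : Type*} [Group F] [Group G]
    (f : F →* G) {g : G} (hfin : {g' | ∃ x, f x * g * (f x)⁻¹ = g'}.Finite) :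
    ((Subgroup.centralizer {g}).comap f).FiniteIndex := by
  let _ : MulAction F G := MulAction.compHom G (MulAut.conj.comp f)
  have horbit : MulAction.orbit F g = {g' | ∃ x, f x * g * (f x)⁻¹ = g'} := rfl
  have hstab : MulAction.stabilizer F g = (Subgroup.centralizer {g}).comap f := by
    ext x
    rw [MulAction.mem_stabilizer_iff, Subgroup.mem_comap, Subgroup.mem_centralizer_singleton_iff,
      ← mul_inv_eq_iff_eq_mul]
    rfl
  refine ⟨?_⟩
  rw [← hstab, MulAction.index_stabilizer, horbit]
  exact (Set.ncard_pos hfin).mpr ⟨g, 1, by simp⟩ |>.ne'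

theorem SemidirectProduct.commute_inl_iff {N G : Type*} [Group N] [Group G] {φ : G →* MulAut N}
    {x : N} {g : N ⋊[φ] G} : Commute (inl x) g ↔ (MulAut.conj g.left * φ g.right) x = x := by
  rw [Commute, SemiconjBy, SemidirectProduct.ext_iff]
  simp only [mul_left, left_inl, right_inl, map_one, MulAut.one_apply, mul_right, one_mul,
    mul_one, and_true, MulAut.mul_apply, MulAut.conj_apply, eq_comm, eq_mul_inv_iff_mul_eq]

theorem FreeGroup.commute_inl_of_finite {ι B : Type*} [Group B] {φ : B →* MulAut (FreeGroup ι)}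
    {a b : ι} (hab : a ≠ b) {g : FreeGroup ι ⋊[φ] B}
    (hfin : {g' | ∃ x, SemidirectProduct.inl x * g * (SemidirectProduct.inl x)⁻¹ = g'}.Finite)
    (x : FreeGroup ι) : Commute (SemidirectProduct.inl x) g := by
  have := Subgroup.finiteIndex_comap_centralizer_of_finite SemidirectProduct.inl hfin
  have hid := FreeGroup.eq_id_of_eqOn_finiteIndex hab
    ((Subgroup.centralizer {g}).comap SemidirectProduct.inl)
    (MulAut.conj g.left * φ g.right).toMonoidHom fun y hy =>
      SemidirectProduct.commute_inl_iff.mp (Subgroup.mem_centralizer_singleton_iff.mp hy)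
  exact SemidirectProduct.commute_inl_iff.mpr (DFunLike.congr_fun hid x)

section ArtinRepresentation

-- Generators and their partial products are indexed by `ℕ`, with value `1` out of range.

def freeGen (n j : ℕ) : FreeGroup (Fin n) := if h : j < n then .of ⟨j, h⟩ else 1

def braidGenNat (n i : ℕ) : BraidGroup n := if h : i < n - 1 then braidGen ⟨i, h⟩ else 1

def freeGenProd (n k : ℕ) : FreeGroup (Fin n) := ((List.range k).map (freeGen n)).prod

def braidGenProd (n k : ℕ) : BraidGroup n := ((List.range k).map (braidGenNat n)).prod

variable {n : ℕ}

theorem freeGenProd_zero : freeGenProd n 0 = 1 := rfl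

theorem freeGenProd_succ (k : ℕ) : freeGenProd n (k + 1) = freeGenProd n k * freeGen n k := by
  simp [freeGenProd, List.range_succ]

theorem braidGenProd_succ (k : ℕ) :
    braidGenProd n (k + 1) = braidGenProd n k * braidGenNat n k := by
  simp [braidGenProd, List.range_succ]

theorem fullWord_eq_freeGenProd : fullWord n = freeGenProd n n := by
  rw [fullWord, freeGenProd, List.ofFn_eq_map, ← List.map_coe_finRange_eq_range, List.map_map]
  congr 2
  funext j
  simp [freeGen]

theorem fullWord_eq_freeGenProd_mul_last (hn : n ≠ 0) :
    fullWord n = freeGenProd n (n - 1) * freeGen n (n - 1) := by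
  rw [fullWord_eq_freeGenProd, ← freeGenProd_succ, Nat.sub_add_cancel (by omega)]

theorem braidZ_eq_braidGenProd_pow : braidZ n = braidGenProd n (n - 1) ^ n := by
  rw [braidZ, braidGenProd, List.ofFn_eq_map, ← List.map_coe_finRange_eq_range, List.map_map]
  congr 3
  funext i
  simp [braidGenNat]

theorem map_freeGenProd_of_forall_lt {M : Type*}
    [FunLike M (FreeGroup (Fin n)) (FreeGroup (Fin n))]
    [MonoidHomClass M (FreeGroup (Fin n)) (FreeGroup (Fin n))] (f : M) {k : ℕ}
    (hf : ∀ j < k, f (freeGen n j) = freeGen n j) : f (freeGenProd n k) = freeGenProd n k := by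
  induction k with
  | zero => exact map_one f
  | succ k ih =>
    rw [freeGenProd_succ, map_mul, ih fun j hj => hf j (by omega), hf k (by omega)]

def mulLastGen (n : ℕ) (g : FreeGroup (Fin n)) : FreeGroup (Fin n) →* FreeGroup (Fin n) :=
  FreeGroup.lift fun j => if (j : ℕ) = n - 1 then g * .of j else .of j

theorem mulLastGen_of (g : FreeGroup (Fin n)) (j : Fin n) :
    mulLastGen n g (.of j) = if (j : ℕ) = n - 1 then g * .of j else .of j :=
  FreeGroup.lift_apply_of

theorem mulLastGen_freeGenProd (g : FreeGroup (Fin n)) :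
    mulLastGen n g (freeGenProd n (n - 1)) = freeGenProd n (n - 1) :=
  map_freeGenProd_of_forall_lt _ fun j hj => by
    by_cases hjn : j < n
    · simp [freeGen, hjn, mulLastGen_of, hj.ne]
    · simp [freeGen, hjn]

theorem mem_zpowers_fullWord_of_commute (hn : n ≠ 0) {u : FreeGroup (Fin n)}
    (h : Commute u (fullWord n)) : u ∈ Subgroup.zpowers (fullWord n) := by
  set P := freeGenProd n (n - 1)
  have hlast : freeGen n (n - 1) = .of ⟨n - 1, by omega⟩ := by
    simp [freeGen, Nat.pos_of_ne_zero hn]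
  -- `fullWord n = P * x_{n-1}`, and `x_{n-1} ↦ P⁻¹ * x_{n-1}` is an automorphism with inverse
  -- `x_{n-1} ↦ P * x_{n-1}`, so `fullWord n` is primitive.
  refine FreeGroup.mem_zpowers_of_commute_of_leftInverse (ψ := mulLastGen n P⁻¹)
    (χ := mulLastGen n P) (a := ⟨n - 1, by omega⟩) (fun v => ?_) ?_ h
  · have hid : (mulLastGen n P).comp (mulLastGen n P⁻¹) = MonoidHom.id _ := by
      refine FreeGroup.ext_hom _ _ fun j => ?_
      by_cases hj : (j : ℕ) = n - 1
      · simp [mulLastGen_of, hj, mulLastGen_freeGenProd, P]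
      · simp [mulLastGen_of, hj]
    exact DFunLike.congr_fun hid v
  · rw [fullWord_eq_freeGenProd_mul_last hn, map_mul, mulLastGen_freeGenProd, hlast]
    simp [mulLastGen_of, P]

variable {α : BraidGroup n →* MulAut (FreeGroup (Fin n))}

theorem IsArtinRep.apply_freeGen_self (hα : IsArtinRep α) {i : ℕ} (hi : i < n - 1) :
    α (braidGenNat n i) (freeGen n i) = freeGen n (i + 1) := by
  simpa [braidGenNat, freeGen, hi, show i < n by omega, show i + 1 < n by omega, finSucc']
    using hα ⟨i, hi⟩ ⟨i, by omega⟩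

theorem IsArtinRep.apply_freeGen_succ (hα : IsArtinRep α) {i : ℕ} (hi : i < n - 1) :
    α (braidGenNat n i) (freeGen n (i + 1)) =
      (freeGen n (i + 1))⁻¹ * freeGen n i * freeGen n (i + 1) := by
  simpa [braidGenNat, freeGen, hi, show i < n by omega, show i + 1 < n by omega, finSucc',
    finInc] using hα ⟨i, hi⟩ ⟨i + 1, by omega⟩

theorem IsArtinRep.apply_freeGen_of_ne (hα : IsArtinRep α) {i j : ℕ} (hji : j ≠ i)
    (hji' : j ≠ i + 1) : α (braidGenNat n i) (freeGen n j) = freeGen n j := by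
  by_cases hi : i < n - 1
  · by_cases hj : j < n
    · simpa [braidGenNat, freeGen, hi, hj, hji, hji'] using hα ⟨i, hi⟩ ⟨j, hj⟩
    · simp [freeGen, hj]
  · simp [braidGenNat, hi]

theorem IsArtinRep.apply_freeGenProd_of_add_two_le (hα : IsArtinRep α) {i k : ℕ}
    (hi : i < n - 1) (hk : i + 2 ≤ k) :
    α (braidGenNat n i) (freeGenProd n k) = freeGenProd n k := by
  induction k, hk using Nat.le_induction with
  | base =>
    have hfix : α (braidGenNat n i) (freeGenProd n i) = freeGenProd n i :=
      map_freeGenProd_of_forall_lt _ fun j hj => hα.apply_freeGen_of_ne (by omega) (by omega)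
    rw [freeGenProd_succ, freeGenProd_succ, map_mul, map_mul, hfix, hα.apply_freeGen_self hi,
      hα.apply_freeGen_succ hi]
    group
  | succ k hk ih =>
    rw [freeGenProd_succ, map_mul, ih, hα.apply_freeGen_of_ne (by omega) (by omega)]

theorem IsArtinRep.apply_fullWord (hα : IsArtinRep α) (c : BraidGroup n) :
    α c (fullWord n) = fullWord n := by
  let K := (MulAction.stabilizer (MulAut (FreeGroup (Fin n))) (fullWord n)).comap α
  suffices hK : Subgroup.closure (Set.range PresentedGroup.of) ≤ K by
    exact hK (by rw [PresentedGroup.closure_range_of]; trivial)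
  rw [Subgroup.closure_le]
  rintro _ ⟨i, rfl⟩
  have hi : braidGenNat n i = PresentedGroup.of i := by simp [braidGenNat, braidGen]
  change α _ (fullWord n) = fullWord n
  rw [← hi, fullWord_eq_freeGenProd]
  exact hα.apply_freeGenProd_of_add_two_le i.isLt (by omega)

theorem IsArtinRep.apply_braidGenProd_freeGen (hα : IsArtinRep α) {k j : ℕ} (hk : k ≤ n - 1)
    (hjk : j ≠ k) :
    α (braidGenProd n k) (freeGen n j) = freeGen n (if j < k then j + 1 else j) := by
  induction k generalizing j with
  | zero => simp [braidGenProd]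
  | succ k ih =>
    rw [braidGenProd_succ, map_mul, MulAut.mul_apply]
    by_cases hjk' : j = k
    · subst hjk'
      rw [hα.apply_freeGen_self (by omega), ih (by omega) (by omega), if_neg (by omega),
        if_pos (by omega)]
    · rw [hα.apply_freeGen_of_ne hjk' hjk, ih (by omega) hjk']
      congr 2
      simp only [Nat.lt_succ_iff_lt_or_eq, hjk', or_false]

-- `δ := braidGenProd n (n - 1) = s_1 ⋯ s_{n-1}` shifts `x_j ↦ x_{j+1}`; `braidZ n = δ ^ n`.

theorem IsArtinRep.apply_delta_freeGen (hα : IsArtinRep α) {j : ℕ} (hj : j < n - 1) :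
    α (braidGenProd n (n - 1)) (freeGen n j) = freeGen n (j + 1) := by
  rw [hα.apply_braidGenProd_freeGen le_rfl hj.ne, if_pos hj]

theorem IsArtinRep.apply_delta_freeGenProd (hα : IsArtinRep α) {k : ℕ} (hk : k ≤ n - 1) :
    α (braidGenProd n (n - 1)) (freeGenProd n k) = (freeGen n 0)⁻¹ * freeGenProd n (k + 1) := by
  induction k with
  | zero => simp [freeGenProd_succ, freeGenProd_zero]
  | succ k ih =>
    rw [freeGenProd_succ, map_mul, ih (by omega), hα.apply_delta_freeGen (by omega),
      freeGenProd_succ (k + 1), mul_assoc]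

theorem IsArtinRep.apply_delta_freeGen_last (hα : IsArtinRep α) (hn : n ≠ 0) :
    α (braidGenProd n (n - 1)) (freeGen n (n - 1)) =
      (fullWord n)⁻¹ * freeGen n 0 * fullWord n := by
  have hW := fullWord_eq_freeGenProd_mul_last hn
  have h := hα.apply_fullWord (braidGenProd n (n - 1))
  rw [hW, map_mul, hα.apply_delta_freeGenProd le_rfl, Nat.sub_add_cancel (by omega),
    ← fullWord_eq_freeGenProd, mul_assoc, inv_mul_eq_iff_eq_mul, ← hW] at h
  rw [mul_assoc, eq_inv_mul_iff_mul_eq, h]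

theorem IsArtinRep.apply_delta_pow_freeGen (hα : IsArtinRep α) {j k : ℕ} (hjk : j + k < n) :
    α (braidGenProd n (n - 1) ^ k) (freeGen n j) = freeGen n (j + k) := by
  induction k with
  | zero => simp
  | succ k ih =>
    rw [pow_succ', map_mul, MulAut.mul_apply, ih (by omega), hα.apply_delta_freeGen (by omega),
      add_assoc]

theorem IsArtinRep.apply_braidZ (hα : IsArtinRep α) (hn : n ≠ 0) :
    α (braidZ n) = MulAut.conj (fullWord n)⁻¹ := by
  refine MulEquiv.toMonoidHom_injective (FreeGroup.ext_hom _ _ fun j => ?_)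
  -- `δ ^ (n - 1 - j)` takes `x_j` to `x_{n-1}`, `δ` takes that to `W⁻¹ x_0 W`,
  -- and `δ ^ j` takes that to `W⁻¹ x_j W`.
  have hj : FreeGroup.of j = freeGen n j := by simp [freeGen]
  have hsplit : braidGenProd n (n - 1) ^ n = braidGenProd n (n - 1) ^ (j : ℕ) *
      braidGenProd n (n - 1) * braidGenProd n (n - 1) ^ (n - 1 - j) := by
    rw [← pow_succ, ← pow_add]
    congr 1
    omega
  have hlast : freeGen n (j + (n - 1 - j)) = freeGen n (n - 1) := by congr 1; omega
  simp only [MulEquiv.coe_toMonoidHom, MulAut.conj_apply, inv_inv, hj]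
  rw [braidZ_eq_braidGenProd_pow, hsplit, map_mul, map_mul, MulAut.mul_apply, MulAut.mul_apply,
    hα.apply_delta_pow_freeGen (by omega), hlast,
    hα.apply_delta_freeGen_last hn, map_mul, map_mul, map_inv, hα.apply_fullWord,
    hα.apply_delta_pow_freeGen (by omega), zero_add]

open SemidirectProduct

theorem IsArtinRep.braidZ_mem_center (hα : IsArtinRep α) (hinj : Function.Injective α)
    (hn : n ≠ 0) : braidZ n ∈ Subgroup.center (BraidGroup n) := by
  refine Subgroup.mem_center_iff.mpr fun c => hinj (MulEquiv.ext fun y => ?_)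
  simp [hα.apply_braidZ hn, hα.apply_fullWord]

theorem IsArtinRep.commute_inl_fullWord_inr_braidZ (hα : IsArtinRep α) (hn : n ≠ 0) :
    Commute (inl (fullWord n) : FreeGroup (Fin n) ⋊[α] BraidGroup n) (inr (braidZ n)) := by
  ext <;> simp [hα.apply_braidZ hn]

theorem IsArtinRep.inl_fullWord_mul_inr_braidZ_mem_center (hα : IsArtinRep α)
    (hinj : Function.Injective α) (hn : n ≠ 0) :
    (inl (fullWord n) * inr (braidZ n) : FreeGroup (Fin n) ⋊[α] BraidGroup n) ∈
      Subgroup.center _ := by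
  refine Subgroup.mem_center_iff.mpr fun g => ?_
  ext
  · simp only [mul_left, mul_right, left_inl, left_inr, right_inl, right_inr, map_one, mul_one,
      one_mul, hα.apply_fullWord, hα.apply_braidZ hn, map_inv, MulAut.inv_apply,
      MulAut.conj_symm_apply]
    group
  · simpa using Subgroup.mem_center_iff.mp (hα.braidZ_mem_center hinj hn) g.right

theorem IsArtinRep.mem_zpowers_of_forall_commute_inl (hα : IsArtinRep α)
    (hinj : Function.Injective α) (hn : n ≠ 0) {g : FreeGroup (Fin n) ⋊[α] BraidGroup n}
    (hg : ∀ x, Commute (inl x) g) :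
    g ∈ Subgroup.zpowers (inl (fullWord n) * inr (braidZ n)) := by
  have hconj (y : FreeGroup (Fin n)) : α g.right y = g.left⁻¹ * y * g.left :=
    calc α g.right y = g.left⁻¹ * (MulAut.conj g.left * α g.right) y * g.left := by
          rw [MulAut.mul_apply, MulAut.conj_apply]; group
      _ = g.left⁻¹ * y * g.left := by rw [commute_inl_iff.mp (hg y)]
  obtain ⟨k, hk⟩ : ∃ k : ℤ, fullWord n ^ k = g.left := by
    refine Subgroup.mem_zpowers_iff.mp (mem_zpowers_fullWord_of_commute hn ?_)
    have hW := hconj (fullWord n)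
    rwa [hα.apply_fullWord, mul_assoc, eq_inv_mul_iff_mul_eq] at hW
  have hright : g.right = braidZ n ^ k := hinj <| MulEquiv.ext fun y => by
    rw [hconj, map_zpow, hα.apply_braidZ hn, ← map_zpow, MulAut.conj_apply, inv_zpow, hk,
      inv_inv]
  refine Subgroup.mem_zpowers_iff.mpr ⟨k, ?_⟩
  rw [(hα.commute_inl_fullWord_inr_braidZ hn).mul_zpow, ← map_zpow, ← map_zpow, hk, ← hright,
    inl_left_mul_inr_right]

end ArtinRepresentation

/-- In `G = F_n ⋊_α B_n` (Artin's representation, `n ≥ 3`, `α` injective), the set of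
`F_n`-conjugates of `g` is finite if and only if `g` lies in the center of `G`, which is
the cyclic group generated by `(x_1⋯x_n)·z`. -/
theorem finite_free_conjugates_iff_center (n : ℕ) (hn : 3 ≤ n)
    (α : BraidGroup n →* MulAut (FreeGroup (Fin n))) (hα : IsArtinRep α)
    (hinj : Function.Injective α) :
    Subgroup.center (FreeGroup (Fin n) ⋊[α] BraidGroup n) =
        Subgroup.zpowers
          (SemidirectProduct.inl (fullWord n) * SemidirectProduct.inr (braidZ n)) ∧
      ∀ g : FreeGroup (Fin n) ⋊[α] BraidGroup n,
        ({g' | ∃ x : FreeGroup (Fin n),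
            SemidirectProduct.inl x * g * (SemidirectProduct.inl x)⁻¹ = g'}.Finite ↔
          g ∈ Subgroup.center (FreeGroup (Fin n) ⋊[α] BraidGroup n)) := by
  have hn0 : n ≠ 0 := by omega
  have hcenter : Subgroup.center (FreeGroup (Fin n) ⋊[α] BraidGroup n) =
      Subgroup.zpowers (SemidirectProduct.inl (fullWord n) * SemidirectProduct.inr (braidZ n)) :=
    le_antisymm
      (fun g hg => hα.mem_zpowers_of_forall_commute_inl hinj hn0 fun x =>
        Subgroup.mem_center_iff.mp hg _)
      (Subgroup.zpowers_le.mpr (hα.inl_fullWord_mul_inr_braidZ_mem_center hinj hn0))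
  refine ⟨hcenter, fun g => ⟨fun hfin => ?_, fun hg => ?_⟩⟩
  · rw [hcenter]
    exact hα.mem_zpowers_of_forall_commute_inl hinj hn0 <|
      FreeGroup.commute_inl_of_finite (a := ⟨0, by omega⟩) (b := ⟨1, by omega⟩)
        (Fin.ne_of_val_ne zero_ne_one) hfin
  · refine (Set.finite_singleton g).subset ?_
    rintro _ ⟨x, rfl⟩
    rw [Set.mem_singleton_iff, Subgroup.mem_center_iff.mp hg, mul_inv_cancel_right]
end

section
/- Let φ: B_n × F_n → T be a 1-cocycle for Artin's representation α (i.e., φ(ab,x) = φ(a,α_b(x))φ(b,x) and φ(a,xy) = φ(a,x)φ(a,y)). Then for all 1 ≤ i ≤ n−2, φ(s_{i+1}, x_i) = φ(s_i, x_{i+2}). -/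
lemma braidGen_mul_braidGen_mul_braidGen {n : ℕ} (i j : Fin (n - 1)) (h : (i : ℕ) + 1 = j) :
    braidGen i * braidGen j * braidGen i = braidGen j * braidGen i * braidGen j := by
  have := PresentedGroup.mk_eq_mk_of_mul_inv_mem (rels := braidRels (n - 1)) (Or.inl ⟨i, j, h, rfl⟩)
  simp only [map_mul] at this
  exact this

section IsArtinRep

variable {n : ℕ} {α : BraidGroup n →* MulAut (FreeGroup (Fin n))}

lemma IsArtinRep.apply_of_succ (hα : IsArtinRep α) (i : Fin (n - 1)) :
    α (braidGen i) (FreeGroup.of (finSucc' i)) =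
      (FreeGroup.of (finSucc' i))⁻¹ * FreeGroup.of (finInc i) * FreeGroup.of (finSucc' i) := by
  simp [hα i, finSucc']

lemma IsArtinRep.apply_of_of_ne (hα : IsArtinRep α) (i : Fin (n - 1)) (j : Fin n)
    (h₀ : (j : ℕ) ≠ i) (h₁ : (j : ℕ) ≠ i + 1) :
    α (braidGen i) (FreeGroup.of j) = FreeGroup.of j := by
  simp [hα i, h₀, h₁]

end IsArtinRep

lemma apply_inv_mul_mul_self_of_map_mul {X A : Type*} [Group X] [CommGroup A] {f : X → A}
    (hf : ∀ x y, f (x * y) = f x * f y) (x y : X) : f (y⁻¹ * x * y) = f x := by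
  let F := MonoidHom.mk' f hf
  change F _ = F _
  rw [map_mul, map_mul, map_inv, mul_comm _ (F x), inv_mul_cancel_right]

section Cocycle

variable {G X A : Type*} [Group G] [Group X] [CommGroup A] (α : G →* MulAut X) {φ : G → X → A}

lemma cocycle_mul_mul (hc : ∀ a b x, φ (a * b) x = φ a (α b x) * φ b x) (a b c : G) (x : X) :
    φ (a * b * c) x = φ a (α b (α c x)) * φ b (α c x) * φ c x := by
  rw [hc, hc]

theorem cocycle_eq_of_braid_rel (hc₁ : ∀ a b x, φ (a * b) x = φ a (α b x) * φ b x)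
    (hc₂ : ∀ a x y, φ a (x * y) = φ a x * φ a y) {a b : G} (hab : a * b * a = b * a * b)
    {x₀ x₁ x₂ : X} (ha₂ : α a x₂ = x₂) (ha₁ : α a x₁ = x₁⁻¹ * x₀ * x₁)
    (hb₂ : α b x₂ = x₂⁻¹ * x₁ * x₂) : φ a x₂ = φ b x₀ := by
  have hconj (c : G) := apply_inv_mul_mul_self_of_map_mul (hc₂ c)
  have hl : φ (a * b * a) x₂ = φ a x₁ * φ b x₂ * φ a x₂ := by
    rw [cocycle_mul_mul α hc₁, ha₂, hb₂, hconj]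
  have hr : φ (b * a * b) x₂ = φ b x₀ * φ a x₁ * φ b x₂ := by
    rw [cocycle_mul_mul α hc₁, hb₂, map_mul, map_mul, map_inv, ha₂, ha₁, hconj, hconj, hconj]
  rw [hab, hr, mul_comm (φ b x₀), mul_right_comm] at hl
  exact (mul_left_cancel hl).symm

end Cocycle

/-- For a 1-cocycle `φ` on `B_n × F_n` for Artin's representation,
`φ(s_{i+1}, x_i) = φ(s_i, x_{i+2})` for all `1 ≤ i ≤ n-2` (here 0-indexed). -/
theorem cocycle_relation_one (n : ℕ)
    (α : BraidGroup n →* MulAut (FreeGroup (Fin n))) (hα : IsArtinRep α)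
    (φ : BraidGroup n → FreeGroup (Fin n) → Circle)
    (hc1 : ∀ (a b : BraidGroup n) (x : FreeGroup (Fin n)),
      φ (a * b) x = φ a (α b x) * φ b x)
    (hc2 : ∀ (a : BraidGroup n) (x y : FreeGroup (Fin n)),
      φ a (x * y) = φ a x * φ a y) :
    ∀ (i : ℕ) (hi : i + 1 < n - 1),
      φ (braidGen ⟨i + 1, hi⟩) (FreeGroup.of ⟨i, by omega⟩)
        = φ (braidGen ⟨i, by omega⟩) (FreeGroup.of ⟨i + 2, by omega⟩) := by
  intro i hi
  have hα₂ := hα.apply_of_of_ne ⟨i, by omega⟩ ⟨i + 2, by omega⟩ (by simp) (by simp)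
  exact (cocycle_eq_of_braid_rel α hc1 hc2
    (braidGen_mul_braidGen_mul_braidGen ⟨i, by omega⟩ ⟨i + 1, hi⟩ rfl)
    hα₂ (hα.apply_of_succ ⟨i, by omega⟩) (hα.apply_of_succ ⟨i + 1, hi⟩)).symm
end

section
/- Let φ: B_n × F_n → T be a 1-cocycle for Artin's representation α with n ≥ 4. Then φ(s_i, x_k) = φ(s_i, x_ℓ) for all 1 ≤ i ≤ n−2 and all k, ℓ ∉ {i, i+1}. -/
/-! ### Auxiliary lemmas -/

lemma relOne {m : ℕ} {r : FreeGroup (Fin m)} (h : r ∈ braidRels m) :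
    PresentedGroup.mk (braidRels m) r = 1 := by
  exact (QuotientGroup.eq_one_iff r).mpr (Subgroup.subset_normalClosure h)

lemma braidGen_eq_mk {n : ℕ} (i : Fin (n - 1)) :
    braidGen (n := n) i = PresentedGroup.mk (braidRels (n - 1)) (FreeGroup.of i) := rfl

lemma braid_comm {n : ℕ} {i j : Fin (n - 1)} (h : (i : ℕ) + 2 ≤ (j : ℕ)) :
    braidGen (n := n) i * braidGen j = braidGen j * braidGen i := by
  have h1 : PresentedGroup.mk (braidRels (n - 1))
      (FreeGroup.of i * FreeGroup.of j * (FreeGroup.of j * FreeGroup.of i)⁻¹) = 1 :=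
    relOne (Or.inr ⟨i, j, h, rfl⟩)
  rw [map_mul, map_inv, map_mul, mul_inv_eq_one] at h1
  rw [braidGen_eq_mk, braidGen_eq_mk]
  exact h1

lemma braid_braid {n : ℕ} {i j : Fin (n - 1)} (h : (i : ℕ) + 1 = (j : ℕ)) :
    braidGen (n := n) i * braidGen j * braidGen i
      = braidGen j * braidGen i * braidGen j := by
  have h1 : PresentedGroup.mk (braidRels (n - 1))
      (FreeGroup.of i * FreeGroup.of j * FreeGroup.of i *
        (FreeGroup.of j * FreeGroup.of i * FreeGroup.of j)⁻¹) = 1 :=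
    relOne (Or.inl ⟨i, j, h, rfl⟩)
  rw [map_mul, map_inv, map_mul, map_mul, map_mul, mul_inv_eq_one] at h1
  rw [braidGen_eq_mk, braidGen_eq_mk]
  exact h1

section Cocycle

variable {n : ℕ} {α : BraidGroup n →* MulAut (FreeGroup (Fin n))}
  {φ : BraidGroup n → FreeGroup (Fin n) → Circle}

lemma art_fix (hα : IsArtinRep α) (i : Fin (n - 1)) (j : Fin n)
    (h1 : (j : ℕ) ≠ (i : ℕ)) (h2 : (j : ℕ) ≠ (i : ℕ) + 1) :
    α (braidGen i) (FreeGroup.of j) = FreeGroup.of j := by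
  rw [hα i j, if_neg h1, if_neg h2]

lemma art_up (hα : IsArtinRep α) (i : Fin (n - 1)) (j j' : Fin n)
    (h : (j : ℕ) = (i : ℕ)) (h' : (j' : ℕ) = (i : ℕ) + 1) :
    α (braidGen i) (FreeGroup.of j) = FreeGroup.of j' := by
  rw [hα i j, if_pos h]
  congr 1
  exact Fin.ext (by simp [finSucc', h'])

/-- Step relation from the commuting braid relation:
`φ(s_i, x_m) = φ(s_i, x_{m+1})` when `{m, m+1}` is disjoint from `{i, i+1}`. -/
lemma comm_step (hα : IsArtinRep α)
    (hc1 : ∀ (a b : BraidGroup n) (x : FreeGroup (Fin n)),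
      φ (a * b) x = φ a (α b x) * φ b x)
    (i m : ℕ) (hi : i < n - 1) (hm : m < n - 1)
    (hd : m + 2 ≤ i ∨ i + 2 ≤ m) :
    φ (braidGen ⟨i, hi⟩) (FreeGroup.of (⟨m, by omega⟩ : Fin n))
      = φ (braidGen ⟨i, hi⟩) (FreeGroup.of (⟨m + 1, by omega⟩ : Fin n)) := by
  have hmn : m < n := by omega
  have hm1n : m + 1 < n := by omega
  have hg : braidGen (n := n) ⟨i, hi⟩ * braidGen ⟨m, hm⟩
      = braidGen ⟨m, hm⟩ * braidGen ⟨i, hi⟩ := by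
    rcases hd with h | h
    · exact (braid_comm (i := ⟨m, hm⟩) (j := ⟨i, hi⟩) h).symm
    · exact braid_comm (i := ⟨i, hi⟩) (j := ⟨m, hm⟩) h
  have e1 := hc1 (braidGen ⟨i, hi⟩) (braidGen ⟨m, hm⟩)
    (FreeGroup.of (⟨m, hmn⟩ : Fin n))
  have e2 := hc1 (braidGen ⟨m, hm⟩) (braidGen ⟨i, hi⟩)
    (FreeGroup.of (⟨m, hmn⟩ : Fin n))
  rw [art_up hα ⟨m, hm⟩ ⟨m, hmn⟩ ⟨m + 1, hm1n⟩ rfl rfl] at e1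
  rw [art_fix hα ⟨i, hi⟩ ⟨m, hmn⟩ (by simp; omega) (by simp; omega)] at e2
  rw [hg] at e1
  have h3 := e1.symm.trans e2
  -- h3 : φ si x(m+1) * φ sm xm = φ sm xm * φ si xm
  rw [mul_comm (φ (braidGen ⟨m, hm⟩) (FreeGroup.of ⟨m, hmn⟩))] at h3
  exact (mul_right_cancel h3).symm

/-- From the braid relation: `φ(s_i, x_k) = φ(s_{i+1}, x_k)` for `k ∉ {i, i+1, i+2}`. -/
lemma gen_eq (hα : IsArtinRep α)
    (hc1 : ∀ (a b : BraidGroup n) (x : FreeGroup (Fin n)),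
      φ (a * b) x = φ a (α b x) * φ b x)
    (i : ℕ) (hi2 : i + 2 < n) (k : Fin n)
    (h0 : (k : ℕ) ≠ i) (h1 : (k : ℕ) ≠ i + 1) (h2 : (k : ℕ) ≠ i + 2) :
    φ (braidGen ⟨i, by omega⟩) (FreeGroup.of k)
      = φ (braidGen ⟨i + 1, by omega⟩) (FreeGroup.of k) := by
  have hi : i < n - 1 := by omega
  have hi1 : i + 1 < n - 1 := by omega
  set s := braidGen (n := n) ⟨i, hi⟩ with hs
  set t := braidGen (n := n) ⟨i + 1, hi1⟩ with ht
  have hg : s * t * s = t * (s * t) := by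
    rw [← mul_assoc]
    exact braid_braid (i := ⟨i, hi⟩) (j := ⟨i + 1, hi1⟩) rfl
  have hfs : α s (FreeGroup.of k) = FreeGroup.of k :=
    art_fix hα ⟨i, hi⟩ k h0 h1
  have hft : α t (FreeGroup.of k) = FreeGroup.of k :=
    art_fix hα ⟨i + 1, hi1⟩ k h1 h2
  have e1 := hc1 (s * t) s (FreeGroup.of k)
  have e2 := hc1 t (s * t) (FreeGroup.of k)
  rw [hfs] at e1
  rw [map_mul, MulAut.mul_apply, hft, hfs] at e2
  rw [hg] at e1
  have h3 := e1.symm.trans e2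
  rw [mul_comm (φ t (FreeGroup.of k))] at h3
  exact mul_left_cancel h3

/-- From the braid relation: `φ(s_i, x_{i+2}) = φ(s_{i+1}, x_i)`. -/
lemma cross (hα : IsArtinRep α)
    (hc1 : ∀ (a b : BraidGroup n) (x : FreeGroup (Fin n)),
      φ (a * b) x = φ a (α b x) * φ b x)
    (i : ℕ) (hi2 : i + 2 < n) :
    φ (braidGen ⟨i, by omega⟩) (FreeGroup.of (⟨i + 2, by omega⟩ : Fin n))
      = φ (braidGen ⟨i + 1, by omega⟩) (FreeGroup.of (⟨i, by omega⟩ : Fin n)) := by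
  have hi : i < n - 1 := by omega
  have hi1 : i + 1 < n - 1 := by omega
  have hin : i < n := by omega
  have hi1n : i + 1 < n := by omega
  have hi2n : i + 2 < n := hi2
  set s := braidGen (n := n) ⟨i, hi⟩ with hs
  set t := braidGen (n := n) ⟨i + 1, hi1⟩ with ht
  set X0 : FreeGroup (Fin n) := FreeGroup.of ⟨i, hin⟩ with hX0
  set X1 : FreeGroup (Fin n) := FreeGroup.of ⟨i + 1, hi1n⟩ with hX1
  set X2 : FreeGroup (Fin n) := FreeGroup.of ⟨i + 2, hi2n⟩ with hX2
  have hg : s * t * s = t * (s * t) := by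
    rw [← mul_assoc]
    exact braid_braid (i := ⟨i, hi⟩) (j := ⟨i + 1, hi1⟩) rfl
  have hs0 : α s X0 = X1 := art_up hα ⟨i, hi⟩ ⟨i, hin⟩ ⟨i + 1, hi1n⟩ rfl rfl
  have ht0 : α t X0 = X0 := art_fix hα ⟨i + 1, hi1⟩ ⟨i, hin⟩
    (by show i ≠ i + 1; omega) (by show i ≠ i + 1 + 1; omega)
  have ht1 : α t X1 = X2 := art_up hα ⟨i + 1, hi1⟩ ⟨i + 1, hi1n⟩ ⟨i + 2, hi2n⟩ rfl rfl
  have e1 := hc1 (s * t) s X0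
  rw [hs0] at e1
  have e1' := hc1 s t X1
  rw [ht1] at e1'
  rw [e1'] at e1
  -- e1 : φ (s*t*s) X0 = φ s X2 * φ t X1 * φ s X0
  have e2 := hc1 t (s * t) X0
  rw [map_mul, MulAut.mul_apply, ht0, hs0] at e2
  have e2' := hc1 s t X0
  rw [ht0] at e2'
  rw [e2'] at e2
  -- e2 : φ (t*(s*t)) X0 = φ t X1 * (φ s X0 * φ t X0)
  rw [hg] at e1
  have h3 := e1.symm.trans e2
  -- h3 : φ s X2 * φ t X1 * φ s X0 = φ t X1 * (φ s X0 * φ t X0)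
  have h4 : φ s X2 * (φ t X1 * φ s X0) = φ t X0 * (φ t X1 * φ s X0) := by
    rw [← mul_assoc, h3]; ac_rfl
  exact mul_right_cancel h4

/-- Chain within the low interval: for `a ≤ b < j`, `φ(s_j, x_a) = φ(s_j, x_b)`. -/
lemma chain_low (hα : IsArtinRep α)
    (hc1 : ∀ (a b : BraidGroup n) (x : FreeGroup (Fin n)),
      φ (a * b) x = φ a (α b x) * φ b x)
    (j : ℕ) (hj : j < n - 1) :
    ∀ b (hb : b < j) (a : ℕ) (ha : a ≤ b),
      φ (braidGen ⟨j, hj⟩) (FreeGroup.of (⟨a, by omega⟩ : Fin n))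
        = φ (braidGen ⟨j, hj⟩) (FreeGroup.of (⟨b, by omega⟩ : Fin n)) := by
  intro b
  induction b with
  | zero =>
      intro hb a ha
      have : a = 0 := by omega
      subst this; rfl
  | succ b ih =>
      intro hb a ha
      rcases Nat.eq_or_lt_of_le ha with h | h
      · subst h; rfl
      · have ha' : a ≤ b := by omega
        have step := comm_step hα hc1 j b hj (by omega) (Or.inl (by omega))
        rw [← step]
        exact ih (by omega) a ha'

/-- Chain within the high interval: for `j + 2 ≤ a ≤ b < n`, `φ(s_j, x_a) = φ(s_j, x_b)`. -/
lemma chain_high (hα : IsArtinRep α)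
    (hc1 : ∀ (a b : BraidGroup n) (x : FreeGroup (Fin n)),
      φ (a * b) x = φ a (α b x) * φ b x)
    (j : ℕ) (hj : j < n - 1) :
    ∀ b (hb : b < n) (a : ℕ) (ha : j + 2 ≤ a) (hab : a ≤ b),
      φ (braidGen ⟨j, hj⟩) (FreeGroup.of (⟨a, by omega⟩ : Fin n))
        = φ (braidGen ⟨j, hj⟩) (FreeGroup.of (⟨b, hb⟩ : Fin n)) := by
  intro b
  induction b with
  | zero => intro hb a ha hab; omega
  | succ b ih =>
      intro hb a ha hab
      rcases Nat.eq_or_lt_of_le hab with h | h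
      · subst h; rfl
      · have hab' : a ≤ b := by omega
        have step := comm_step hα hc1 j b hj (by omega) (Or.inr (by omega))
        rw [← step]
        exact ih (by omega) a ha hab'

end Cocycle

/-- For `n ≥ 4` and a 1-cocycle `φ` on `B_n × F_n` for Artin's representation,
`φ(s_i, x_k) = φ(s_i, x_ℓ)` for all `1 ≤ i ≤ n-2` (0-indexed: `i + 2 < n`) and all
`k, ℓ ∉ {i, i+1}`. -/
theorem cocycle_relation_four (n : ℕ) (hn : 4 ≤ n)
    (α : BraidGroup n →* MulAut (FreeGroup (Fin n))) (hα : IsArtinRep α)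
    (φ : BraidGroup n → FreeGroup (Fin n) → Circle)
    (hc1 : ∀ (a b : BraidGroup n) (x : FreeGroup (Fin n)),
      φ (a * b) x = φ a (α b x) * φ b x)
    (hc2 : ∀ (a : BraidGroup n) (x y : FreeGroup (Fin n)),
      φ a (x * y) = φ a x * φ a y) :
    ∀ (i : ℕ) (hi : i + 2 < n) (k l : Fin n),
      (k : ℕ) ≠ i → (k : ℕ) ≠ i + 1 → (l : ℕ) ≠ i → (l : ℕ) ≠ i + 1 →
        φ (braidGen ⟨i, by omega⟩) (FreeGroup.of k)
          = φ (braidGen ⟨i, by omega⟩) (FreeGroup.of l) := by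
  intro i hi k l hk0 hk1 hl0 hl1
  have hin1 : i < n - 1 := by omega
  have hi1n1 : i + 1 < n - 1 := by omega
  have hin : i < n := by omega
  have hi2n : i + 2 < n := hi
  -- canonical value : φ(s_{i+1}, x_i)
  have key : ∀ m : Fin n, (m : ℕ) ≠ i → (m : ℕ) ≠ i + 1 →
      φ (braidGen ⟨i, hin1⟩) (FreeGroup.of m)
        = φ (braidGen ⟨i + 1, hi1n1⟩) (FreeGroup.of (⟨i, hin⟩ : Fin n)) := by
    intro m hm0 hm1
    obtain ⟨mv, hmv⟩ := m
    simp only at hm0 hm1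
    rcases lt_or_ge mv i with hlt | hge
    · -- low case
      have e1 : φ (braidGen ⟨i, hin1⟩) (FreeGroup.of (⟨mv, hmv⟩ : Fin n))
          = φ (braidGen ⟨i + 1, hi1n1⟩) (FreeGroup.of (⟨mv, hmv⟩ : Fin n)) :=
        gen_eq hα hc1 i hi ⟨mv, hmv⟩ (by simpa using hm0) (by simpa using hm1)
          (by simp; omega)
      rw [e1]
      exact chain_low hα hc1 (i + 1) hi1n1 i (by omega) mv (by omega)
    · -- high case: mv ≥ i + 2
      have hge2 : i + 2 ≤ mv := by omega
      have e1 : φ (braidGen ⟨i, hin1⟩) (FreeGroup.of (⟨i + 2, hi2n⟩ : Fin n))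
          = φ (braidGen ⟨i, hin1⟩) (FreeGroup.of (⟨mv, hmv⟩ : Fin n)) :=
        chain_high hα hc1 i hin1 mv hmv (i + 2) (by omega) hge2
      rw [← e1]
      exact cross hα hc1 i hi
  rw [key k hk0 hk1, key l hl0 hl1]
end
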